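/- arXiv:2311.13989 — 5 statements merged into one kernel-verified Lean document; each statement's English description precedes it below -/
import Mathlib

section
/- Let m₂ ≤ g(t) ≤ M₂ for all t ∈ [u, v] with u ≤ v, and let S ∈ [u, v]. Then (1/2)(m₂(S-u)² - M₂(S-v)²) ≤ ∫_u^v (S - t) g(t) dt ≤ (1/2)(M₂(S-u)² - m₂(S-v)²). -/
theorem stmt_2 (u v : ℝ) (huv : u ≤ v) (g : ℝ → ℝ)
    (hg : ContinuousOn g (Set.Icc u v)) (m₂ M₂ S : ℝ)
    (hbound : ∀ t ∈ Set.Icc u v, m₂ ≤ g t ∧ g t ≤ M₂)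
    (hS : S ∈ Set.Icc u v) :
    (1/2) * (m₂ * (S - u)^2 - M₂ * (S - v)^2) ≤ ∫ t in u..v, (S - t) * g t ∧
    (∫ t in u..v, (S - t) * g t) ≤ (1/2) * (M₂ * (S - u)^2 - m₂ * (S - v)^2) := by
  obtain ⟨hSu, hSv⟩ := hS
  have hcont : ContinuousOn (fun t => (S - t) * g t) (Set.Icc u v) :=
    (continuousOn_const.sub continuousOn_id).mul hg
  have hsub1 : Set.uIcc u S ⊆ Set.Icc u v := by
    rw [Set.uIcc_of_le hSu]; exact Set.Icc_subset_Icc le_rfl hSv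
  have hsub2 : Set.uIcc S v ⊆ Set.Icc u v := by
    rw [Set.uIcc_of_le hSv]; exact Set.Icc_subset_Icc hSu le_rfl
  have hint1 : IntervalIntegrable (fun t => (S - t) * g t) MeasureTheory.volume u S :=
    (hcont.mono hsub1).intervalIntegrable
  have hint2 : IntervalIntegrable (fun t => (S - t) * g t) MeasureTheory.volume S v :=
    (hcont.mono hsub2).intervalIntegrable
  have hsplit : (∫ t in u..v, (S - t) * g t)
      = (∫ t in u..S, (S - t) * g t) + ∫ t in S..v, (S - t) * g t :=
    (intervalIntegral.integral_add_adjacent_intervals hint1 hint2).symm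
  have key : ∀ c a b : ℝ, (∫ t in a..b, c * (S - t)) = c * (S * (b - a) - (b^2 - a^2) / 2) := by
    intro c a b
    rw [intervalIntegral.integral_const_mul]
    have h : (∫ t in a..b, (S - t)) = (∫ _ in a..b, S) - ∫ t in a..b, t :=
      intervalIntegral.integral_sub intervalIntegrable_const (continuous_id.intervalIntegrable _ _)
    rw [h, intervalIntegral.integral_const, integral_id]
    rw [smul_eq_mul]; ring
  have hc : ∀ c : ℝ, IntervalIntegrable (fun t => c * (S - t)) MeasureTheory.volume u S ∧
      IntervalIntegrable (fun t => c * (S - t)) MeasureTheory.volume S v := by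
    intro c
    constructor <;> exact (continuous_const.mul (continuous_const.sub continuous_id)).intervalIntegrable _ _
  -- lower bound on [u,S]
  have h1 : (∫ t in u..S, m₂ * (S - t)) ≤ ∫ t in u..S, (S - t) * g t := by
    apply intervalIntegral.integral_mono_on hSu (hc m₂).1 hint1
    intro t ht
    have h1 := (hbound t ⟨ht.1, ht.2.trans hSv⟩).1
    nlinarith [ht.2]
  have h2 : (∫ t in u..S, (S - t) * g t) ≤ ∫ t in u..S, M₂ * (S - t) := by
    apply intervalIntegral.integral_mono_on hSu hint1 (hc M₂).1
    intro t ht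
    have h1 := (hbound t ⟨ht.1, ht.2.trans hSv⟩).2
    nlinarith [ht.2]
  -- on [S,v], S - t ≤ 0, so bounds flip
  have h3 : (∫ t in S..v, M₂ * (S - t)) ≤ ∫ t in S..v, (S - t) * g t := by
    apply intervalIntegral.integral_mono_on hSv (hc M₂).2 hint2
    intro t ht
    have h1 := (hbound t ⟨hSu.trans ht.1, ht.2⟩).2
    nlinarith [ht.1]
  have h4 : (∫ t in S..v, (S - t) * g t) ≤ ∫ t in S..v, m₂ * (S - t) := by
    apply intervalIntegral.integral_mono_on hSv hint2 (hc m₂).2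
    intro t ht
    have h1 := (hbound t ⟨hSu.trans ht.1, ht.2⟩).1
    nlinarith [ht.1]
  rw [key] at h1 h2 h3 h4
  constructor <;> [nlinarith [h1, h3, hsplit]; nlinarith [h2, h4, hsplit]]
end

section
/- Let n ≥ 2 and let weights ω₀,...,ω_{n-1} and points t₁,...,t_{n-1} ∈ ℝ with t₀ = 0, tₙ = 1, Sₖ = ∑_{j=0}^{k} ωⱼ satisfy Sₖ = (tₖ + t_{k+1})/2 for k = 0,...,n-1 and tₖ = S_{k-1} + ωₖ/2 for k = 1,...,n-1. Then ω_{k+1} = ωₖ for all k = 1,...,n-2, i.e., ω₁ = ω₂ = ... = ω_{n-1}. -/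
open Finset

theorem succ_eq_of_midpoint_partialSum {K : Type*} [Field K] [CharZero K] (ω t : ℕ → K) (k : ℕ)
    (hS : ∑ j ∈ range (k + 1), ω j = (t k + t (k + 1)) / 2)
    (htk : t k = ∑ j ∈ range k, ω j + ω k / 2)
    (htk_succ : t (k + 1) = ∑ j ∈ range (k + 1), ω j + ω (k + 1) / 2) :
    ω (k + 1) = ω k := by
  rw [sum_range_succ] at hS htk_succ
  -- substituting both formulas for `t` into `hS` leaves `ω k / 4 = ω (k + 1) / 4`
  linear_combination (-4 : K) * hS - 2 * htk - 2 * htk_succ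

theorem stmt_7_general (n : ℕ) (ω t : ℕ → ℝ)
    (hS : ∀ k < n, (∑ j ∈ Finset.range (k + 1), ω j) = (t k + t (k + 1)) / 2)
    (ht : ∀ k, 1 ≤ k → k ≤ n - 1 →
      t k = (∑ j ∈ Finset.range k, ω j) + ω k / 2) :
    ∀ k, 1 ≤ k → k ≤ n - 2 → ω (k + 1) = ω k := by
  intro k hk hkn
  exact succ_eq_of_midpoint_partialSum ω t k (hS k (by omega)) (ht k hk (by omega))
    (ht (k + 1) (by omega) (by omega))

theorem stmt_7 (n : ℕ) (hn : 2 ≤ n) (ω t : ℕ → ℝ)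
    (ht0 : t 0 = 0) (htn : t n = 1)
    (hS : ∀ k < n, (∑ j ∈ Finset.range (k + 1), ω j) = (t k + t (k + 1)) / 2)
    (ht : ∀ k, 1 ≤ k → k ≤ n - 1 →
      t k = (∑ j ∈ Finset.range k, ω j) + ω k / 2) :
    ∀ k, 1 ≤ k → k ≤ n - 2 → ω (k + 1) = ω k :=
  stmt_7_general n ω t hS ht
end

section
/- Let n ≥ 2 and suppose ω₀,...,ω_{n-1}, t₁,...,t_{n-1} satisfy the extremum conditions Sₖ = (tₖ + t_{k+1})/2 for k = 0,...,n-1 and tₖ = S_{k-1} + ωₖ/2 for k = 1,...,n-1, with t₀ = 0, tₙ = 1, Sₖ = ∑_{j=0}^{k} ωⱼ. Then ω₀ = 1/(2n), ωₖ = 1/n for k = 1,...,n-1, and tₖ = k/n for k = 1,...,n-1. -/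
/-!
Writing `tₖ = Sₖ - ωₖ/2`, the midpoint condition `Sₖ = (tₖ + tₖ₊₁)/2` says
`tₖ₊₁ = Sₖ + ωₖ/2`, while the second condition says `tₖ₊₁ = Sₖ + ωₖ₊₁/2`; hence all the
interior weights agree with a common value `c`, and at `k = 0` one gets `ω₀ = c/2`.
Then `Sₖ = c/2 + k c` and `tₖ = k c`, and the last midpoint condition (with `tₙ = 1`)
forces `n c = 1`.
-/

open Finset

theorem eq_of_succ_eq_of_le {α : Type*} {f : ℕ → α} {a b : ℕ}
    (h : ∀ k, a ≤ k → k < b → f (k + 1) = f k) : ∀ k, a ≤ k → k ≤ b → f k = f a := by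
  intro k hak
  induction k, hak using Nat.le_induction with
  | base => exact fun _ => rfl
  | succ k hak ih => exact fun hkb => by rw [h k hak (by omega), ih (by omega)]

theorem sum_range_succ_eq_of_eq_const {R : Type*} [Semiring R] {f : ℕ → R} {m : ℕ} {c : R}
    (h : ∀ k, 1 ≤ k → k ≤ m → f k = c) : ∑ j ∈ range (m + 1), f j = m * c + f 0 := by
  rw [sum_range_succ', sum_congr rfl fun j hj => h (j + 1) (by omega) (by simp at hj; omega),
    sum_const, card_range, nsmul_eq_mul]

section ExtremumConditions

variable {n : ℕ} {ω t : ℕ → ℝ}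

theorem omega_zero_eq_half_omega_one (hn : 2 ≤ n) (ht0 : t 0 = 0)
    (hS : ∀ k < n, (∑ j ∈ range (k + 1), ω j) = (t k + t (k + 1)) / 2)
    (ht : ∀ k, 1 ≤ k → k ≤ n - 1 → t k = (∑ j ∈ range k, ω j) + ω k / 2) :
    ω 0 = ω 1 / 2 := by
  have h0 := hS 0 (by omega)
  have h1 := ht 1 le_rfl (by omega)
  simp only [zero_add, sum_range_one, ht0] at h0 h1
  linarith

theorem omega_succ_eq_omega
    (hS : ∀ k < n, (∑ j ∈ range (k + 1), ω j) = (t k + t (k + 1)) / 2)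
    (ht : ∀ k, 1 ≤ k → k ≤ n - 1 → t k = (∑ j ∈ range k, ω j) + ω k / 2)
    {k : ℕ} (hk : 1 ≤ k) (hkn : k + 1 ≤ n - 1) : ω (k + 1) = ω k := by
  have hSk := hS k (by omega)
  have htk := ht k hk (by omega)
  have htk1 := ht (k + 1) (by omega) hkn
  rw [sum_range_succ] at hSk htk1
  linarith

end ExtremumConditions

theorem stmt_8 (n : ℕ) (hn : 2 ≤ n) (ω t : ℕ → ℝ)
    (ht0 : t 0 = 0) (htn : t n = 1)
    (hS : ∀ k < n, (∑ j ∈ Finset.range (k + 1), ω j) = (t k + t (k + 1)) / 2)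
    (ht : ∀ k, 1 ≤ k → k ≤ n - 1 →
      t k = (∑ j ∈ Finset.range k, ω j) + ω k / 2) :
    ω 0 = 1 / (2 * n) ∧
    (∀ k, 1 ≤ k → k ≤ n - 1 → ω k = 1 / n) ∧
    (∀ k, 1 ≤ k → k ≤ n - 1 → t k = k / n) := by
  have hω0 := omega_zero_eq_half_omega_one hn ht0 hS ht
  have hconst : ∀ k, 1 ≤ k → k ≤ n - 1 → ω k = ω 1 :=
    eq_of_succ_eq_of_le fun k hk hkn => omega_succ_eq_omega hS ht hk (by omega)
  have hsum (m : ℕ) (hm : m ≤ n - 1) : ∑ j ∈ range (m + 1), ω j = m * ω 1 + ω 0 :=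
    sum_range_succ_eq_of_eq_const fun k hk hkm => hconst k hk (by omega)
  have htk (k : ℕ) (hk : 1 ≤ k) (hkn : k ≤ n - 1) : t k = k * ω 1 := by
    obtain ⟨m, rfl⟩ : ∃ m, k = m + 1 := ⟨k - 1, by omega⟩
    rw [ht _ hk hkn, hsum m (by omega), hconst _ hk hkn, hω0]
    push_cast
    ring
  obtain ⟨m, rfl⟩ : ∃ m, n = m + 1 := ⟨n - 1, by omega⟩
  have hω1 : ω 1 = 1 / (m + 1) := by
    have hlast := hS m (by omega)
    rw [hsum m (by omega), htk m (by omega) (by omega), htn, hω0] at hlast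
    rw [eq_div_iff (by positivity)]
    linarith
  refine ⟨?_, fun k hk hkn => ?_, fun k hk hkn => ?_⟩
  · rw [hω0, hω1]
    push_cast
    field_simp
  · rw [hconst k hk hkn, hω1]
    push_cast
    rfl
  · rw [htk k hk hkn, hω1]
    push_cast
    ring
end

section
/- For any real weights ω₀,...,ω_{n-1} and points 0 = t₀ ≤ t₁ ≤ ... ≤ tₙ = 1 with Sₖ = ∑_{j=0}^{k} ωⱼ, the quantity ∑_{k=0}^{n-1}[(Sₖ - tₖ)² + (Sₖ - t_{k+1})²] is at least 1/(2n), with equality attained when Sₖ = (2k+1)/(2n) and tₖ = k/n. -/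
/-!
Each summand is at least `(t (k+1) - t k)² / 2`, the minimum of `(s - a)² + (s - b)²` being
attained at the midpoint `s = (a + b) / 2`. The increments `t (k+1) - t k` telescope to
`t n - t 0 = 1`, so by Cauchy–Schwarz their squares sum to at least `1 / n`. Equally spaced
points with `Sₖ` the midpoints make every summand equal to `1 / (2 n²)`.
-/

open Finset

lemma sub_sq_div_two_le_sq_sub_add_sq_sub (s a b : ℝ) :
    (b - a) ^ 2 / 2 ≤ (s - a) ^ 2 + (s - b) ^ 2 := by
  nlinarith [sq_nonneg (2 * s - a - b)]

lemma sq_sub_div_le_sum_sq_sub (t : ℕ → ℝ) (n : ℕ) :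
    (t n - t 0) ^ 2 / n ≤ ∑ k ∈ range n, (t (k + 1) - t k) ^ 2 := by
  rcases n.eq_zero_or_pos with rfl | hn
  · simp
  rw [div_le_iff₀ (by positivity), ← sum_range_sub, mul_comm]
  simpa using sq_sum_le_card_mul_sum_sq (s := range n) (f := fun k => t (k + 1) - t k)

theorem sq_sub_div_two_mul_le_sum_sq_sub_add_sq_sub (s t : ℕ → ℝ) (n : ℕ) :
    (t n - t 0) ^ 2 / (2 * n) ≤
      ∑ k ∈ range n, ((s k - t k) ^ 2 + (s k - t (k + 1)) ^ 2) :=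
  calc (t n - t 0) ^ 2 / (2 * n) = (t n - t 0) ^ 2 / n / 2 := by ring
    _ ≤ (∑ k ∈ range n, (t (k + 1) - t k) ^ 2) / 2 := by
      gcongr
      exact sq_sub_div_le_sum_sq_sub t n
    _ = ∑ k ∈ range n, (t (k + 1) - t k) ^ 2 / 2 := sum_div ..
    _ ≤ _ := sum_le_sum fun k _ => sub_sq_div_two_le_sq_sub_add_sq_sub _ _ _

lemma sum_sq_sub_add_sq_sub_of_midpoints (n : ℕ) :
    ∑ k ∈ range n, (((2 * k + 1) / (2 * n) - k / n) ^ 2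
      + ((2 * k + 1) / (2 * n) - (k + 1) / n) ^ 2 : ℝ) = 1 / (2 * n) := by
  rcases n.eq_zero_or_pos with rfl | hn
  · simp
  have hn' : (n : ℝ) ≠ 0 := by positivity
  have hterm : ∀ k : ℕ, (((2 * k + 1) / (2 * n) - k / n) ^ 2
      + ((2 * k + 1) / (2 * n) - (k + 1) / n) ^ 2 : ℝ) = 1 / (2 * n ^ 2) := by
    intro k
    field_simp
    ring
  simp only [hterm, sum_const, card_range, nsmul_eq_mul]
  field_simp

theorem stmt_17_general (n : ℕ) (ω t : ℕ → ℝ)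
    (ht0 : t 0 = 0) (htn : t n = 1) :
    (1 / (2 * (n : ℝ)) ≤ ∑ k ∈ Finset.range n,
        (((∑ j ∈ Finset.range (k + 1), ω j) - t k)^2
          + ((∑ j ∈ Finset.range (k + 1), ω j) - t (k + 1))^2)) ∧
    (((∀ k < n, (∑ j ∈ Finset.range (k + 1), ω j) = (2 * (k : ℝ) + 1) / (2 * n)) ∧
        (∀ k ≤ n, t k = (k : ℝ) / n)) →
      ∑ k ∈ Finset.range n,
        (((∑ j ∈ Finset.range (k + 1), ω j) - t k)^2
          + ((∑ j ∈ Finset.range (k + 1), ω j) - t (k + 1))^2)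
        = 1 / (2 * (n : ℝ))) := by
  refine ⟨?_, fun ⟨hS, ht⟩ => ?_⟩
  · simpa [ht0, htn] using
      sq_sub_div_two_mul_le_sum_sq_sub_add_sq_sub (fun k => ∑ j ∈ range (k + 1), ω j) t n
  · rw [← sum_sq_sub_add_sq_sub_of_midpoints n]
    refine sum_congr rfl fun k hk => ?_
    rw [mem_range] at hk
    rw [hS k hk, ht k hk.le, ht (k + 1) hk]
    push_cast
    rfl

theorem stmt_17 (n : ℕ) (hn : 1 ≤ n) (ω t : ℕ → ℝ)
    (ht0 : t 0 = 0) (htn : t n = 1)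
    (hmono : ∀ k < n, t k ≤ t (k + 1)) :
    (1 / (2 * (n : ℝ)) ≤ ∑ k ∈ Finset.range n,
        (((∑ j ∈ Finset.range (k + 1), ω j) - t k)^2
          + ((∑ j ∈ Finset.range (k + 1), ω j) - t (k + 1))^2)) ∧
    (((∀ k < n, (∑ j ∈ Finset.range (k + 1), ω j) = (2 * (k : ℝ) + 1) / (2 * n)) ∧
        (∀ k ≤ n, t k = (k : ℝ) / n)) →
      ∑ k ∈ Finset.range n,
        (((∑ j ∈ Finset.range (k + 1), ω j) - t k)^2
          + ((∑ j ∈ Finset.range (k + 1), ω j) - t (k + 1))^2)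
        = 1 / (2 * (n : ℝ))) :=
  stmt_17_general n ω t ht0 htn
end

section
/- Let g be continuous on [u,v] ⊆ ℝ with u ≤ v and m₂ ≤ g(t) ≤ M₂ on [u,v], and let S be any real number. Then ∫_u^v (S-t) g(t) dt ≤ (1/2)(M₂(S-u)² - m₂(S-v)²) holds in each of the three cases S ≤ u, u ≤ S ≤ v, and S ≥ v, hence for all S ∈ ℝ. -/
open Set

open intervalIntegral in
lemma aux_lin_int (a b c S : ℝ) :
    (∫ t in a..b, (S - t) * c) = c / 2 * ((S - a) ^ 2 - (S - b) ^ 2) := by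
  have h : (∫ t in a..b, (S - t) * c) = (∫ t in a..b, (S - t)) * c :=
    intervalIntegral.integral_mul_const c _
  rw [h, intervalIntegral.integral_sub intervalIntegrable_const
    (continuous_id'.intervalIntegrable a b)]
  simp [integral_id, mul_comm]
  ring

theorem stmt_18 (u v : ℝ) (huv : u ≤ v) (g : ℝ → ℝ)
    (hg : ContinuousOn g (Set.Icc u v)) (m₂ M₂ : ℝ)
    (hbound : ∀ t ∈ Set.Icc u v, m₂ ≤ g t ∧ g t ≤ M₂) :
    ∀ S : ℝ, (∫ t in u..v, (S - t) * g t)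
      ≤ (1/2) * (M₂ * (S - u)^2 - m₂ * (S - v)^2) := by
  intro S
  have hmM : m₂ ≤ M₂ := by
    have := hbound u ⟨le_refl u, huv⟩; linarith [this.1, this.2]
  have hcont : ContinuousOn (fun t => (S - t) * g t) (Set.Icc u v) :=
    (continuousOn_const.sub continuousOn_id).mul hg
  have hInt : ∀ a b : ℝ, a ≤ b → Set.Icc a b ⊆ Set.Icc u v →
      IntervalIntegrable (fun t => (S - t) * g t) MeasureTheory.volume a b := by
    intro a b hab hsub
    exact (hcont.mono hsub).intervalIntegrable_of_Icc hab
  have hc : ∀ (c a b : ℝ), IntervalIntegrable (fun t => (S - t) * c) MeasureTheory.volume a b :=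
    fun c a b => ((continuous_const.sub continuous_id').mul continuous_const).intervalIntegrable a b
  rcases le_total S u with hSu | huS
  · -- S ≤ u : (S - t) ≤ 0 on [u,v], so (S-t) g t ≤ (S-t) m₂
    have hmono : (∫ t in u..v, (S - t) * g t) ≤ ∫ t in u..v, (S - t) * m₂ := by
      apply intervalIntegral.integral_mono_on huv (hInt u v huv subset_rfl) (hc m₂ u v)
      intro t ht
      have h1 : S - t ≤ 0 := by linarith [ht.1]
      have h2 := (hbound t ht).1
      nlinarith
    rw [aux_lin_int] at hmono
    nlinarith [sq_nonneg (S - u)]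
  · rcases le_total S v with hSv | hvS
    · -- u ≤ S ≤ v : split at S
      have h1 : IntervalIntegrable (fun t => (S - t) * g t) MeasureTheory.volume u S :=
        hInt u S huS (Set.Icc_subset_Icc le_rfl hSv)
      have h2 : IntervalIntegrable (fun t => (S - t) * g t) MeasureTheory.volume S v :=
        hInt S v hSv (Set.Icc_subset_Icc huS le_rfl)
      rw [← intervalIntegral.integral_add_adjacent_intervals h1 h2]
      have hb1 : (∫ t in u..S, (S - t) * g t) ≤ ∫ t in u..S, (S - t) * M₂ := by
        apply intervalIntegral.integral_mono_on huS h1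
          (hc M₂ u S)
        intro t ht
        have ht' : t ∈ Set.Icc u v := ⟨ht.1, le_trans ht.2 hSv⟩
        have : S - t ≥ 0 := by linarith [ht.2]
        nlinarith [(hbound t ht').2]
      have hb2 : (∫ t in S..v, (S - t) * g t) ≤ ∫ t in S..v, (S - t) * m₂ := by
        apply intervalIntegral.integral_mono_on hSv h2
          (hc m₂ S v)
        intro t ht
        have ht' : t ∈ Set.Icc u v := ⟨le_trans huS ht.1, ht.2⟩
        have : S - t ≤ 0 := by linarith [ht.1]
        nlinarith [(hbound t ht').1]
      rw [aux_lin_int] at hb1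
      rw [aux_lin_int] at hb2
      nlinarith
    · -- v ≤ S
      have hmono : (∫ t in u..v, (S - t) * g t) ≤ ∫ t in u..v, (S - t) * M₂ := by
        apply intervalIntegral.integral_mono_on huv (hInt u v huv subset_rfl) (hc M₂ u v)
        intro t ht
        have h1 : S - t ≥ 0 := by linarith [ht.2]
        nlinarith [(hbound t ht).2]
      rw [aux_lin_int] at hmono
      nlinarith [sq_nonneg (S - v)]
end
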